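/- arXiv:1002.1377 — 2 statements merged into one kernel-verified Lean document; each statement's English description precedes it below -/
import Mathlib

section
/- Let g : ℝ → ℝ vanish on (−∞,0] and be a decreasing, convex, nonnegative function on (0,+∞), and set K_t(s) = g(t−s) for t ≥ 0. Then for all 0 ≤ a ≤ b ≤ c ≤ d ≤ r, ∫₀ʳ (K_d(s) − K_c(s)) (K_b(s) − K_a(s)) ds ≤ 0 (assuming the integrals involved are finite). -/
/-!
Write `ψ(s) = g(d - s) - g(c - s)` and `φ(s) = g(b - s) - g(a - s)`. Increments of a convex
function increase, so `ψ` is antitone on `(-∞, c)`; and `φ ≤ 0` on `(-∞, a)`, `φ ≥ 0` on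
`[a, b)`, `φ = 0` on `[b, ∞)`. Hence `ψ φ ≤ ψ(a) φ` pointwise, while `ψ(a) ≤ 0` and
`∫₀ʳ φ = ∫ₐᵇ g ≥ 0`. When `ψ(a) < 0`, the bound `|ψ(a)| g(b - s) ≤ |ψ φ|(s)` on `(a, b]` shows
that `g` is integrable near `0`, which makes `φ` integrable.
-/

open MeasureTheory Set

theorem ConvexOn.map_add_sub_le_map_add_sub {s : Set ℝ} {f : ℝ → ℝ} (hf : ConvexOn ℝ s f)
    {x y δ : ℝ} (hx : x ∈ s) (hy : y + δ ∈ s) (hxy : x ≤ y) (hδ : 0 ≤ δ) :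
    f (x + δ) - f x ≤ f (y + δ) - f y := by
  rcases hδ.eq_or_lt with rfl | hδ
  · simp
  have hIcc : Icc x (y + δ) ⊆ s := hf.1.ordConnected.out hx hy
  have hxδ : x + δ ∈ s \ {x} := ⟨hIcc ⟨by linarith, by linarith⟩, by simp [hδ.ne']⟩
  have hy' : y ∈ s \ {y + δ} := ⟨hIcc ⟨hxy, by linarith⟩, by simp [hδ.ne']⟩
  have h₁ : slope f x (x + δ) ≤ slope f x (y + δ) :=
    hf.slope_mono hx hxδ ⟨hy, fun h : y + δ = x => by linarith⟩ (by linarith)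
  have h₂ : slope f (y + δ) x ≤ slope f (y + δ) y :=
    hf.slope_mono hy ⟨hx, fun h : x = y + δ => by linarith⟩ hy' hxy
  rw [slope_comm f x (y + δ)] at h₁
  have h := h₁.trans h₂
  simp only [slope_def_field] at h
  rw [show y - (y + δ) = -δ by ring, div_neg, ← neg_div, neg_sub, add_sub_cancel_left,
    div_le_div_iff_of_pos_right hδ] at h
  exact h

section

variable {g : ℝ → ℝ}

theorem ConvexOn.antitoneOn_sub_comp_sub (hconv : ConvexOn ℝ (Ioi 0) g) {c d : ℝ}
    (hcd : c ≤ d) :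
    AntitoneOn (fun s => g (d - s) - g (c - s)) (Iio c) := by
  intro s hs t ht hst
  have := hconv.map_add_sub_le_map_add_sub (x := c - t) (y := c - s) (δ := d - c)
    (mem_Ioi.2 (sub_pos.2 ht)) (mem_Ioi.2 (by linarith [mem_Iio.1 hs])) (by linarith)
    (by linarith)
  simpa only [sub_add_sub_cancel'] using this

theorem nonneg_of_nonpos_eq_zero (hzero : ∀ x : ℝ, x ≤ 0 → g x = 0)
    (hnonneg : ∀ x : ℝ, 0 < x → 0 ≤ g x) (x : ℝ) : 0 ≤ g x :=
  (le_or_gt x 0).elim (fun h => (hzero x h).ge) (hnonneg x)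

theorem sub_comp_sub_mul_le (hzero : ∀ x : ℝ, x ≤ 0 → g x = 0)
    (hnonneg : ∀ x : ℝ, 0 < x → 0 ≤ g x) (hdec : AntitoneOn g (Ioi 0))
    (hconv : ConvexOn ℝ (Ioi 0) g) {a b c d : ℝ} (hab : a ≤ b) (hbc : b ≤ c) (hcd : c ≤ d)
    (s : ℝ) :
    (g (d - s) - g (c - s)) * (g (b - s) - g (a - s)) ≤
      (g (d - a) - g (c - a)) * (g (b - s) - g (a - s)) := by
  rcases hab.eq_or_lt with rfl | hab
  · simp
  have hψ := hconv.antitoneOn_sub_comp_sub hcd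
  rcases lt_or_ge s a with hsa | has
  · have hφ : g (b - s) - g (a - s) ≤ 0 :=
      sub_nonpos.2 (hdec (mem_Ioi.2 (by linarith)) (mem_Ioi.2 (by linarith)) (by linarith))
    exact mul_le_mul_of_nonpos_right (hψ (by linarith : s < c) (by linarith : a < c) hsa.le) hφ
  rcases lt_or_ge s b with hsb | hbs
  · have hφ : 0 ≤ g (b - s) - g (a - s) := by
      rw [hzero (a - s) (by linarith), sub_zero]
      exact hnonneg _ (by linarith)
    exact mul_le_mul_of_nonneg_right (hψ (by linarith : a < c) (by linarith : s < c) has) hφ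
  · rw [hzero (b - s) (by linarith), hzero (a - s) (by linarith), sub_self, mul_zero, mul_zero]

theorem measurable_of_convexOn_Ioi (hzero : ∀ x : ℝ, x ≤ 0 → g x = 0)
    (hconv : ConvexOn ℝ (Ioi 0) g) : Measurable g := by
  classical
  have : g = (Ioi 0).piecewise g 0 := by
    funext x
    by_cases hx : 0 < x
    · simp [hx]
    · simp [hx, hzero x (not_lt.1 hx)]
  rw [this]
  exact (hconv.continuousOn isOpen_Ioi).measurable_piecewise continuousOn_const measurableSet_Ioi

theorem intervalIntegrable_of_nonpos (hzero : ∀ x : ℝ, x ≤ 0 → g x = 0) {x : ℝ} (hx : x ≤ 0) :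
    IntervalIntegrable g volume x 0 :=
  intervalIntegrable_const.congr_uIoo fun u hu => by
    rw [uIoo_of_le hx] at hu
    exact (hzero u hu.2.le).symm

theorem intervalIntegral_eq_zero_of_nonpos (hzero : ∀ x : ℝ, x ≤ 0 → g x = 0) {x : ℝ}
    (hx : x ≤ 0) :
    ∫ u in x..0, g u = 0 := by
  rw [intervalIntegral.integral_congr (g := fun _ => 0), intervalIntegral.integral_zero]
  intro u hu
  rw [uIcc_of_le hx] at hu
  exact hzero u hu.2

theorem intervalIntegrable_comp_sub_left_of_le (hzero : ∀ x : ℝ, x ≤ 0 → g x = 0) {b r : ℝ}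
    (hg : IntervalIntegrable g volume 0 b) (hbr : b ≤ r) :
    IntervalIntegrable (fun s => g (b - s)) volume 0 r := by
  have := ((intervalIntegrable_of_nonpos hzero (sub_nonpos.2 hbr)).trans hg).comp_sub_left b
  simpa using this.symm

theorem integral_comp_sub_left_of_le (hzero : ∀ x : ℝ, x ≤ 0 → g x = 0) {b r : ℝ}
    (hg : IntervalIntegrable g volume 0 b) (hbr : b ≤ r) :
    ∫ s in 0..r, g (b - s) = ∫ u in 0..b, g u := by
  rw [intervalIntegral.integral_comp_sub_left, sub_zero,
    ← intervalIntegral.integral_add_adjacent_intervals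
      (intervalIntegrable_of_nonpos hzero (sub_nonpos.2 hbr)) hg,
    intervalIntegral_eq_zero_of_nonpos hzero (sub_nonpos.2 hbr), zero_add]

theorem intervalIntegrable_of_integrableOn_sub_comp_sub_mul (hzero : ∀ x : ℝ, x ≤ 0 → g x = 0)
    (hnonneg : ∀ x : ℝ, 0 < x → 0 ≤ g x) (hdec : AntitoneOn g (Ioi 0))
    (hconv : ConvexOn ℝ (Ioi 0) g) {a b c d : ℝ} (h0a : 0 ≤ a) (hab : a < b) (hbc : b ≤ c)
    (hcd : c ≤ d)
    (hψa : g (d - a) - g (c - a) < 0)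
    (hint : IntegrableOn
      (fun s => (g (d - s) - g (c - s)) * (g (b - s) - g (a - s))) (Ioc a b)) :
    IntervalIntegrable g volume 0 b := by
  have hg0 := nonneg_of_nonpos_eq_zero hzero hnonneg
  have hgb : IntegrableOn (fun s => g (b - s)) (Ioc a b) := by
    refine Integrable.mono' (hint.norm.const_mul |g (d - a) - g (c - a)|⁻¹)
      ((measurable_of_convexOn_Ioi hzero hconv).comp
        (measurable_const.sub measurable_id)).aestronglyMeasurable ?_
    refine (ae_restrict_iff' measurableSet_Ioc).2 (ae_of_all _ fun s hs => ?_)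
    have hφ : g (b - s) - g (a - s) = g (b - s) := by
      rw [hzero (a - s) (by linarith [hs.1]), sub_zero]
    have hpt := sub_comp_sub_mul_le hzero hnonneg hdec hconv hab.le hbc hcd s
    rw [hφ] at hpt ⊢
    rw [Real.norm_of_nonneg (hg0 _), Real.norm_eq_abs]
    calc g (b - s) = |g (d - a) - g (c - a)|⁻¹ * |(g (d - a) - g (c - a)) * g (b - s)| := by
          rw [abs_mul, abs_of_nonneg (hg0 _), inv_mul_cancel_left₀ (abs_pos.2 hψa.ne).ne']
      _ ≤ _ := mul_le_mul_of_nonneg_left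
          (abs_le_abs_of_nonpos (mul_nonpos_of_nonpos_of_nonneg hψa.le (hg0 _)) hpt)
          (by positivity)
  have hnear0 : IntervalIntegrable g volume 0 (b - a) := by
    have := ((intervalIntegrable_iff_integrableOn_Ioc_of_le hab.le).2 hgb).comp_sub_left b
    simpa using this.symm
  refine hnear0.trans (AntitoneOn.intervalIntegrable (hdec.mono fun x hx => ?_))
  rw [uIcc_of_le (by linarith)] at hx
  exact mem_Ioi.2 (lt_of_lt_of_le (by linarith) hx.1)

theorem integral_sub_comp_sub_eq (hzero : ∀ x : ℝ, x ≤ 0 → g x = 0) {a b r : ℝ}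
    (ha : IntervalIntegrable g volume 0 a) (hb : IntervalIntegrable g volume 0 b) (har : a ≤ r)
    (hbr : b ≤ r) :
    ∫ s in 0..r, (g (b - s) - g (a - s)) = ∫ u in a..b, g u := by
  rw [intervalIntegral.integral_sub (intervalIntegrable_comp_sub_left_of_le hzero hb hbr)
      (intervalIntegrable_comp_sub_left_of_le hzero ha har),
    integral_comp_sub_left_of_le hzero hb hbr, integral_comp_sub_left_of_le hzero ha har,
    intervalIntegral.integral_interval_sub_left hb ha]

end

/-- Negative-correlation lemma: let `g : ℝ → ℝ` vanish on `(-∞, 0]` and be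
nonnegative, decreasing and convex on `(0, ∞)`, and set `K_t(s) = g(t - s)`.
Then for `0 ≤ a ≤ b ≤ c ≤ d ≤ r`,
`∫₀ʳ (K_d(s) - K_c(s)) (K_b(s) - K_a(s)) ds ≤ 0`
(assuming the integrand is integrable). -/
theorem negative_correlation_lemma (g : ℝ → ℝ)
    (hzero : ∀ x : ℝ, x ≤ 0 → g x = 0)
    (hnonneg : ∀ x : ℝ, 0 < x → 0 ≤ g x)
    (hdec : AntitoneOn g (Set.Ioi 0))
    (hconv : ConvexOn ℝ (Set.Ioi 0) g)
    (r a b c d : ℝ) (h0a : 0 ≤ a) (hab : a ≤ b) (hbc : b ≤ c) (hcd : c ≤ d) (hdr : d ≤ r)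
    (hint : IntegrableOn
      (fun s => (g (d - s) - g (c - s)) * (g (b - s) - g (a - s))) (Set.Ioc 0 r)) :
    (∫ s in Set.Ioc (0 : ℝ) r, (g (d - s) - g (c - s)) * (g (b - s) - g (a - s))) ≤ 0 := by
  rcases hab.eq_or_lt with rfl | hab
  · simp
  have hbr : b ≤ r := hbc.trans (hcd.trans hdr)
  have h0r : 0 ≤ r := h0a.trans (hab.le.trans hbr)
  have hpt := sub_comp_sub_mul_le hzero hnonneg hdec hconv hab.le hbc hcd
  have hψa : g (d - a) - g (c - a) ≤ 0 :=
    sub_nonpos.2 (hdec (mem_Ioi.2 (by linarith)) (mem_Ioi.2 (by linarith)) (by linarith))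
  rcases hψa.eq_or_lt with hψa | hψa
  · exact setIntegral_nonpos measurableSet_Ioc fun s _ => by simpa [hψa] using hpt s
  have hg : IntervalIntegrable g volume 0 b :=
    intervalIntegrable_of_integrableOn_sub_comp_sub_mul hzero hnonneg hdec hconv h0a hab hbc hcd
      hψa (hint.mono_set (Ioc_subset_Ioc h0a hbr))
  have ha : IntervalIntegrable g volume 0 a :=
    hg.mono_set (uIcc_subset_uIcc_left (mem_uIcc_of_le h0a hab.le))
  have hφ : IntegrableOn (fun s => g (b - s) - g (a - s)) (Ioc 0 r) :=
    (intervalIntegrable_iff_integrableOn_Ioc_of_le h0r).1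
      ((intervalIntegrable_comp_sub_left_of_le hzero hg hbr).sub
        (intervalIntegrable_comp_sub_left_of_le hzero ha (hab.le.trans hbr)))
  calc (∫ s in Ioc (0 : ℝ) r, (g (d - s) - g (c - s)) * (g (b - s) - g (a - s)))
      ≤ ∫ s in Ioc (0 : ℝ) r, (g (d - a) - g (c - a)) * (g (b - s) - g (a - s)) :=
        setIntegral_mono_on hint (hφ.const_mul _) measurableSet_Ioc fun s _ => hpt s
    _ = (g (d - a) - g (c - a)) * ∫ u in a..b, g u := by
        rw [integral_const_mul, ← intervalIntegral.integral_of_le h0r,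
          integral_sub_comp_sub_eq hzero ha hg (hab.le.trans hbr) hbr]
    _ ≤ 0 := mul_nonpos_of_nonpos_of_nonneg hψa.le
        (intervalIntegral.integral_nonneg hab.le fun u _ =>
          nonneg_of_nonpos_eq_zero hzero hnonneg u)
end

section
/- Fix a positive integer n, a signed measure μ on [0,r] with ‖μ‖₁ ≤ 1 (r < e^{-2}), and the n-essential partition 𝕀ⁿ_μ of [0,r] defined by the stopping rule: a binary interval I of level l is divided while ‖μ‖₁(I) ≥ l/n. Then: (i) the number of intervals in the partition satisfies |𝕀ⁿ_μ| ≤ 2(n+1); and (ii) the terminal (divided-but-children-not-divided) intervals Q of the construction satisfy Σ_{l≥0} l·q_l ≤ n where q_l = #{I ∈ Q : |I| = 2^{-l} r}, so the number of possible n-essential partitions over all μ with ‖μ‖₁ ≤ 1 does not exceed (4e)ⁿ. -/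
open scoped ENNReal
open MeasureTheory

/-- The critical Volterra kernel `K_t(s) = (t-s)₊^{-1/2} |ln (t-s)₊|^{-1}`,
interpreted as `0` for `s ≥ t`. -/
noncomputable def Ker (t s : ℝ) : ℝ :=
  if s < t then (t - s) ^ (-(1 : ℝ) / 2) * |Real.log (t - s)|⁻¹ else 0

/-- The adjoint operator `V* : M[0,r] → L₂[0,r]`, `(V*μ)(s) = ∫₀ʳ K_t(s) μ(dt)`,
where the integral against the signed measure `μ` is computed through its Jordan
decomposition. -/
noncomputable def VstarInt (μ : MeasureTheory.SignedMeasure ℝ) (s : ℝ) : ℝ :=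
  (∫ t, Ker t s ∂μ.toJordanDecomposition.posPart) -
    ∫ t, Ker t s ∂μ.toJordanDecomposition.negPart

/-- The binary interval of level `l` and index `i` in `[0,r]`:
`(i·r·2^{-l}, (i+1)·r·2^{-l}]`. -/
def binInt (r : ℝ) (l i : ℕ) : Set ℝ :=
  Set.Ioc ((i : ℝ) * r / 2 ^ l) (((i : ℝ) + 1) * r / 2 ^ l)

/-- The left endpoint `t_I` of the binary interval of level `l`, index `i`. -/
noncomputable def leftPt (r : ℝ) (l i : ℕ) : ℝ := (i : ℝ) * r / 2 ^ l

/-- The dividing condition for a binary interval of level `l`: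
`‖μ‖₁(I) ≥ l/n`, with `‖μ‖₁(I)` the total variation of `μ` on `I`. -/
def DivCond (μ : MeasureTheory.SignedMeasure ℝ) (r : ℝ) (n l i : ℕ) : Prop :=
  (l : ℝ) / (n : ℝ) ≤ (μ.totalVariation (binInt r l i)).toReal

/-- `Divided μ r n l i` : in the construction of the `n`-essential partition the
binary interval of level `l`, index `i` was divided, i.e. it was reached (its
parent was divided; the root `(0,0)` is always reached) and it satisfies the
dividing condition `‖μ‖₁(I) ≥ l/n`. -/
def Divided (μ : MeasureTheory.SignedMeasure ℝ) (r : ℝ) (n : ℕ) : ℕ → ℕ → Prop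
  | 0, i => i = 0
  | l + 1, i => Divided μ r n l (i / 2) ∧ DivCond μ r n (l + 1) i

/-- Membership of the binary interval of level `l`, index `i` in the `n`-essential
partition `𝕀ⁿ_μ`: its parent was divided but the interval itself fails the
dividing condition (so it was placed into the partition). -/
def InPartition (μ : MeasureTheory.SignedMeasure ℝ) (r : ℝ) (n : ℕ) : ℕ → ℕ → Prop
  | 0, _ => False
  | l + 1, i => Divided μ r n l (i / 2) ∧ ¬ DivCond μ r n (l + 1) i

/-- A terminal divided interval: it was divided, but neither of its two halves was
divided. These form the set `Q` determining the construction. -/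
def TerminalDiv (μ : MeasureTheory.SignedMeasure ℝ) (r : ℝ) (n : ℕ) (l i : ℕ) : Prop :=
  Divided μ r n l i ∧ ¬ Divided μ r n (l + 1) (2 * i) ∧ ¬ Divided μ r n (l + 1) (2 * i + 1)

/-!
A divided interval of level `l` carries mass at least `l / n`, and the terminal divided intervals
are pairwise disjoint, so their levels add up to at most `n ‖μ‖₁ ≤ n`. Every divided interval of
positive level lies on the path from some terminal interval to the root, which gives at most `n`
of them; the partition consists of the leaves of the full binary tree of divided intervals, so it
has at most `n + 2` elements. The terminal set determines the partition, and by Rankin's trick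
the number of admissible terminal sets is at most
`2ⁿ ∏_{l ≤ n} (1 + 2⁻ˡ)^(2ˡ) ≤ 2ⁿ · 2 · eⁿ ≤ (4e)ⁿ`.
-/

/-- `p` is `q` or an ancestor of `q` in the tree of binary intervals indexed by
`(level, index)`, where the parent of `(l + 1, i)` is `(l, i / 2)`. -/
def IsAncestor (p q : ℕ × ℕ) : Prop := p.1 ≤ q.1 ∧ q.2 / 2 ^ (q.1 - p.1) = p.2

def ancestors (Q : Set (ℕ × ℕ)) : Set (ℕ × ℕ) := {p | ∃ q ∈ Q, IsAncestor p q}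

def children (D : Set (ℕ × ℕ)) : Set (ℕ × ℕ) := {p | 0 < p.1 ∧ (p.1 - 1, p.2 / 2) ∈ D}

theorem IsAncestor.refl (p : ℕ × ℕ) : IsAncestor p p := ⟨le_rfl, by simp⟩

theorem IsAncestor.parent {l c : ℕ} {q : ℕ × ℕ} (h : IsAncestor (l + 1, c) q) :
    IsAncestor (l, c / 2) q := by
  obtain ⟨hle, hc⟩ := h
  dsimp only at hle hc ⊢
  subst hc
  refine ⟨by omega, ?_⟩
  rw [Nat.div_div_eq_div_mul, ← pow_succ, show q.1 - (l + 1) + 1 = q.1 - l by omega]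

theorem encard_children_le (D : Set (ℕ × ℕ)) : (children D).encard ≤ 2 * D.encard := by
  have hsub : children D ⊆ (fun p : ℕ × ℕ => (p.1 + 1, 2 * p.2)) '' D ∪
      (fun p : ℕ × ℕ => (p.1 + 1, 2 * p.2 + 1)) '' D := by
    rintro ⟨l, i⟩ ⟨hl, hD⟩
    rcases Nat.mod_two_eq_zero_or_one i with h | h
    · exact Or.inl ⟨_, hD, Prod.ext (by dsimp only at hl ⊢; omega) (by dsimp only; omega)⟩
    · exact Or.inr ⟨_, hD, Prod.ext (by dsimp only at hl ⊢; omega) (by dsimp only; omega)⟩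
  calc (children D).encard
      ≤ D.encard + D.encard :=
        (Set.encard_mono hsub).trans <| (Set.encard_union_le _ _).trans <|
          add_le_add (Set.encard_image_le _ _) (Set.encard_image_le _ _)
    _ = 2 * D.encard := (two_mul _).symm

section BinaryIntervals

variable {r : ℝ}

theorem binInt_eq (r : ℝ) (l i : ℕ) :
    binInt r l i = Set.Ioc (i * (r / 2 ^ l)) ((i + 1) * (r / 2 ^ l)) := by
  simp only [binInt, mul_div_assoc]

theorem binInt_disjoint (hr : 0 ≤ r) (l : ℕ) {i j : ℕ} (hij : i ≠ j) :
    Disjoint (binInt r l i) (binInt r l j) := by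
  wlog h : i < j generalizing i j
  · exact (this hij.symm (by omega)).symm
  rw [binInt_eq, binInt_eq]
  apply Set.Ioc_disjoint_Ioc_of_le
  gcongr
  exact_mod_cast h

theorem binInt_subset_of_isAncestor (hr : 0 ≤ r) {p q : ℕ × ℕ} (h : IsAncestor p q) :
    binInt r q.1 q.2 ⊆ binInt r p.1 p.2 := by
  obtain ⟨a, j⟩ := p
  obtain ⟨b, i⟩ := q
  obtain ⟨hle, hj⟩ := h
  dsimp only at hle hj ⊢
  subst hj
  obtain ⟨k, rfl⟩ := Nat.exists_eq_add_of_le hle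
  rw [Nat.add_sub_cancel_left]
  have hlow : i / 2 ^ k * 2 ^ k ≤ i := Nat.div_mul_le_self i (2 ^ k)
  have hup : i + 1 ≤ (i / 2 ^ k + 1) * 2 ^ k := by
    have := Nat.lt_mul_div_succ i (show 0 < 2 ^ k by positivity)
    linarith
  have hscale : r / 2 ^ a = 2 ^ k * (r / 2 ^ (a + k)) := by
    rw [pow_add]
    field_simp
  rw [binInt_eq, binInt_eq, hscale, ← mul_assoc, ← mul_assoc]
  apply Set.Ioc_subset_Ioc
  · gcongr
    exact_mod_cast hlow
  · gcongr
    exact_mod_cast hup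

end BinaryIntervals

section Divided

variable {μ : SignedMeasure ℝ} {r : ℝ} {n : ℕ}

theorem Divided.lt_two_pow {l i : ℕ} (h : Divided μ r n l i) : i < 2 ^ l := by
  induction l generalizing i with
  | zero => simp [show i = 0 from h]
  | succ l ih =>
    have := ih h.1
    rw [pow_succ]
    omega

theorem Divided.of_isAncestor {p q : ℕ × ℕ} (hq : Divided μ r n q.1 q.2) (h : IsAncestor p q) :
    Divided μ r n p.1 p.2 := by
  obtain ⟨a, j⟩ := p
  obtain ⟨b, i⟩ := q
  obtain ⟨hle, hj⟩ := h
  dsimp only at hle hj hq ⊢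
  subst hj
  obtain ⟨k, rfl⟩ := Nat.exists_eq_add_of_le hle
  rw [Nat.add_sub_cancel_left]
  clear hle
  induction k generalizing i with
  | zero => simpa using hq
  | succ k ih =>
    rw [pow_succ', ← Nat.div_div_eq_div_mul]
    exact ih _ hq.1

theorem Divided.level_le_mul_totalVariation (hn : 0 < n)
    (hμ : μ.totalVariation Set.univ ≤ 1) {l i : ℕ} (h : Divided μ r n l i) :
    (l : ℝ≥0∞) ≤ n * μ.totalVariation (binInt r l i) := by
  cases l with
  | zero => simp
  | succ l =>
    have hfin : μ.totalVariation (binInt r (l + 1) i) ≠ ∞ :=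
      ne_top_of_le_ne_top ENNReal.one_ne_top ((measure_mono (Set.subset_univ _)).trans hμ)
    have hcond := (div_le_iff₀' (by exact_mod_cast hn)).1 h.2
    rw [← ENNReal.toReal_le_toReal (by simp) (ENNReal.mul_ne_top (by simp) hfin),
      ENNReal.toReal_mul, ENNReal.toReal_natCast, ENNReal.toReal_natCast]
    exact_mod_cast hcond

theorem Divided.level_le (hn : 0 < n) (hμ : μ.totalVariation Set.univ ≤ 1) {l i : ℕ}
    (h : Divided μ r n l i) : l ≤ n := by
  have : (l : ℝ≥0∞) ≤ n := (h.level_le_mul_totalVariation hn hμ).trans <|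
    mul_le_of_le_one_right (by positivity) ((measure_mono (Set.subset_univ _)).trans hμ)
  exact_mod_cast this

theorem TerminalDiv.eq_of_isAncestor {p q : ℕ × ℕ} (hp : TerminalDiv μ r n p.1 p.2)
    (hq : Divided μ r n q.1 q.2) (h : IsAncestor p q) : p = q := by
  obtain ⟨hle, hdiv⟩ := h
  rcases hle.eq_or_lt with heq | hlt
  · exact Prod.ext heq (by simpa [heq] using hdiv.symm)
  -- the ancestor of `q` one level below `p` would be a divided child of `p`
  set c := q.2 / 2 ^ (q.1 - (p.1 + 1))
  have hc : IsAncestor (p.1 + 1, c) q := ⟨hlt, rfl⟩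
  have hcp : c / 2 = p.2 := hc.parent.2.symm.trans hdiv
  have hcd := hq.of_isAncestor hc
  rcases Nat.mod_two_eq_zero_or_one c with h2 | h2
  · exact absurd (show c = 2 * p.2 by omega) fun h => hp.2.1 (h ▸ hcd)
  · exact absurd (show c = 2 * p.2 + 1 by omega) fun h => hp.2.2 (h ▸ hcd)

theorem TerminalDiv.disjoint (hr : 0 ≤ r) {p q : ℕ × ℕ} (hp : TerminalDiv μ r n p.1 p.2)
    (hq : TerminalDiv μ r n q.1 q.2) (hpq : p ≠ q) :
    Disjoint (binInt r p.1 p.2) (binInt r q.1 q.2) := by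
  wlog hle : p.1 ≤ q.1 generalizing p q
  · exact (this hq hp hpq.symm (by omega)).symm
  have hne : q.2 / 2 ^ (q.1 - p.1) ≠ p.2 := fun h => hpq (hp.eq_of_isAncestor hq.1 ⟨hle, h⟩)
  exact (binInt_disjoint hr p.1 hne.symm).mono_right
    (binInt_subset_of_isAncestor hr (p := (p.1, q.2 / 2 ^ (q.1 - p.1))) ⟨hle, rfl⟩)

theorem Divided.exists_terminalDiv (hn : 0 < n) (hμ : μ.totalVariation Set.univ ≤ 1) {l i : ℕ}
    (h : Divided μ r n l i) : ∃ q : ℕ × ℕ, TerminalDiv μ r n q.1 q.2 ∧ IsAncestor (l, i) q := by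
  by_cases ht : TerminalDiv μ r n l i
  · exact ⟨(l, i), ht, .refl _⟩
  obtain ⟨c, hci, hc⟩ : ∃ c, c / 2 = i ∧ Divided μ r n (l + 1) c := by
    simp only [TerminalDiv, not_and_or, not_not] at ht
    rcases ht with ht | ht | ht
    · exact absurd h ht
    · exact ⟨2 * i, by omega, ht⟩
    · exact ⟨2 * i + 1, by omega, ht⟩
  obtain ⟨q, hq, hcq⟩ := hc.exists_terminalDiv hn hμ
  exact ⟨q, hq, hci ▸ hcq.parent⟩
termination_by n + 1 - l
decreasing_by have := h.level_le hn hμ; omega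

end Divided

theorem setOf_inPartition_eq (μ : SignedMeasure ℝ) (r : ℝ) (n : ℕ) :
    {p : ℕ × ℕ | InPartition μ r n p.1 p.2} =
      children {p | Divided μ r n p.1 p.2} \ {p | Divided μ r n p.1 p.2} := by
  ext ⟨_ | l, i⟩
  · simp [InPartition, children]
  · simp only [Set.mem_ofPred_eq, Set.mem_sdiff, InPartition, children, Divided,
      Nat.add_sub_cancel, Nat.succ_pos, true_and]
    tauto

def grid (n : ℕ) : Finset (ℕ × ℕ) :=
  (Finset.range (n + 1)).biUnion fun l => {l} ×ˢ Finset.range (2 ^ l)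

theorem mem_grid {n : ℕ} {p : ℕ × ℕ} : p ∈ grid n ↔ p.1 ≤ n ∧ p.2 < 2 ^ p.1 := by
  obtain ⟨l, i⟩ := p
  simp [grid]

section Partition

variable {μ : SignedMeasure ℝ} {r : ℝ} {n : ℕ}

theorem ancestors_setOf_terminalDiv (hn : 0 < n) (hμ : μ.totalVariation Set.univ ≤ 1) :
    ancestors {q | TerminalDiv μ r n q.1 q.2} = {p | Divided μ r n p.1 p.2} := by
  ext p
  constructor
  · rintro ⟨q, hq, hpq⟩
    exact hq.1.of_isAncestor hpq
  · intro hp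
    exact hp.exists_terminalDiv hn hμ

theorem finite_setOf_terminalDiv (hn : 0 < n) (hμ : μ.totalVariation Set.univ ≤ 1) :
    {q : ℕ × ℕ | TerminalDiv μ r n q.1 q.2}.Finite :=
  (grid n).finite_toSet.subset fun _ hq =>
    mem_grid.2 ⟨hq.1.level_le hn hμ, hq.1.lt_two_pow⟩

theorem tsum_level_terminalDiv_le (hr : 0 ≤ r) (hn : 0 < n)
    (hμ : μ.totalVariation Set.univ ≤ 1) :
    ∑' q : {q : ℕ × ℕ // TerminalDiv μ r n q.1 q.2}, (q.1.1 : ℝ≥0∞) ≤ n := by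
  have hdisj : Pairwise fun p q : {q : ℕ × ℕ // TerminalDiv μ r n q.1 q.2} =>
      Disjoint (binInt r p.1.1 p.1.2) (binInt r q.1.1 q.1.2) :=
    fun p q hpq => p.2.disjoint hr q.2 (Subtype.coe_injective.ne hpq)
  calc ∑' q : {q : ℕ × ℕ // TerminalDiv μ r n q.1 q.2}, (q.1.1 : ℝ≥0∞)
      ≤ ∑' q : {q : ℕ × ℕ // TerminalDiv μ r n q.1 q.2},
          n * μ.totalVariation (binInt r q.1.1 q.1.2) :=
        ENNReal.tsum_le_tsum fun q => q.2.1.level_le_mul_totalVariation hn hμ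
    _ = n * μ.totalVariation
          (⋃ q : {q : ℕ × ℕ // TerminalDiv μ r n q.1 q.2}, binInt r q.1.1 q.1.2) := by
        rw [ENNReal.tsum_mul_left, measure_iUnion hdisj fun _ => measurableSet_Ioc]
    _ ≤ n * 1 := by
        gcongr
        exact (measure_mono (Set.subset_univ _)).trans hμ
    _ = n := mul_one _

theorem sum_level_terminalDiv_le (hr : 0 ≤ r) (hn : 0 < n)
    (hμ : μ.totalVariation Set.univ ≤ 1) {s : Finset (ℕ × ℕ)}
    (hs : ∀ q ∈ s, TerminalDiv μ r n q.1 q.2) : ∑ q ∈ s, q.1 ≤ n := by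
  have : ((∑ q ∈ s, q.1 : ℕ) : ℝ≥0∞) ≤ n :=
    calc ((∑ q ∈ s, q.1 : ℕ) : ℝ≥0∞)
        = ∑' q : s, ((q : ℕ × ℕ).1 : ℝ≥0∞) := by
          push_cast
          exact (Finset.tsum_subtype s fun q => (q.1 : ℝ≥0∞)).symm
      _ ≤ ∑' q : {q : ℕ × ℕ // TerminalDiv μ r n q.1 q.2}, (q.1.1 : ℝ≥0∞) :=
          ENNReal.tsum_mono_subtype (fun q => (q.1 : ℝ≥0∞)) hs
      _ ≤ n := tsum_level_terminalDiv_le hr hn hμ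
  exact_mod_cast this

theorem encard_setOf_divided_pos_le (hr : 0 ≤ r) (hn : 0 < n) (hμ : μ.totalVariation Set.univ ≤ 1) :
    {p : ℕ × ℕ | 0 < p.1 ∧ Divided μ r n p.1 p.2}.encard ≤ n := by
  set T := (finite_setOf_terminalDiv hn hμ).toFinset
  let path (q : ℕ × ℕ) : Finset (ℕ × ℕ) :=
    (Finset.Icc 1 q.1).image fun k => (k, q.2 / 2 ^ (q.1 - k))
  have hsub : {p : ℕ × ℕ | 0 < p.1 ∧ Divided μ r n p.1 p.2} ⊆ ↑(T.biUnion path) := by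
    rintro p ⟨hp0, hp⟩
    obtain ⟨q, hq, hle, hdiv⟩ := hp.exists_terminalDiv hn hμ
    exact Finset.mem_biUnion.2 ⟨q, by simpa [T] using hq,
      Finset.mem_image.2 ⟨p.1, Finset.mem_Icc.2 ⟨hp0, hle⟩, Prod.ext rfl hdiv⟩⟩
  have hcard : (T.biUnion path).card ≤ n :=
    calc (T.biUnion path).card
        ≤ ∑ q ∈ T, (path q).card := Finset.card_biUnion_le
      _ ≤ ∑ q ∈ T, q.1 := Finset.sum_le_sum fun q _ =>
          Finset.card_image_le.trans (by simp)
      _ ≤ n := sum_level_terminalDiv_le hr hn hμ (by simp [T])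
  calc _ ≤ ((T.biUnion path : Finset (ℕ × ℕ)) : Set (ℕ × ℕ)).encard := Set.encard_mono hsub
    _ ≤ n := by
        rw [Set.encard_coe_eq_coe_finsetCard]
        exact_mod_cast hcard

theorem encard_setOf_inPartition_le (hr : 0 ≤ r) (hn : 0 < n)
    (hμ : μ.totalVariation Set.univ ≤ 1) :
    {p : ℕ × ℕ | InPartition μ r n p.1 p.2}.encard ≤ n + 2 := by
  set D := {p : ℕ × ℕ | Divided μ r n p.1 p.2}
  set Dpos := {p : ℕ × ℕ | 0 < p.1 ∧ Divided μ r n p.1 p.2}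
  have hDpos : Dpos ⊆ children D := by
    rintro ⟨_ | l, i⟩ ⟨hl, hp⟩
    · exact absurd hl (lt_irrefl 0)
    · exact ⟨hl, hp.1⟩
  have hD : D ⊆ insert (0, 0) Dpos := by
    rintro ⟨_ | l, i⟩ hp
    · exact Or.inl (Prod.ext rfl hp)
    · exact Or.inr ⟨l.succ_pos, hp⟩
  have hP : {p : ℕ × ℕ | InPartition μ r n p.1 p.2} ⊆ children D \ Dpos := by
    rw [setOf_inPartition_eq]
    exact Set.sdiff_subset_sdiff_right fun p hp => hp.2
  have hDpos_le : Dpos.encard ≤ n := encard_setOf_divided_pos_le hr hn hμ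
  -- a full binary tree has one more leaf than internal nodes
  have hleaves : {p : ℕ × ℕ | InPartition μ r n p.1 p.2}.encard + Dpos.encard ≤
      (Dpos.encard + 2) + Dpos.encard :=
    calc _ ≤ (children D \ Dpos).encard + Dpos.encard := by grw [hP]
      _ = (children D).encard := Set.encard_sdiff_add_encard_of_subset hDpos
      _ ≤ 2 * D.encard := encard_children_le D
      _ ≤ 2 * (Dpos.encard + 1) := by grw [hD, Set.encard_insert_le]
      _ = (Dpos.encard + 2) + Dpos.encard := by ring
  calc _ ≤ Dpos.encard + 2 :=
        (ENat.add_le_add_iff_right (ne_top_of_le_ne_top (ENat.natCast_ne_top n) hDpos_le)).1 hleaves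
    _ ≤ n + 2 := by grw [hDpos_le]

end Partition

theorem card_filter_powerset_sum_le {α : Type*} (s : Finset α) (w : α → ℕ) (n : ℕ) :
    ((s.powerset.filter fun t => ∑ a ∈ t, w a ≤ n).card : ℝ) ≤
      2 ^ n * ∏ a ∈ s, (1 + 2⁻¹ ^ w a) := by
  have hweight : ∀ t ∈ s.powerset.filter fun t => ∑ a ∈ t, w a ≤ n,
      (1 : ℝ) ≤ 2 ^ n * ∏ a ∈ t, (2⁻¹ : ℝ) ^ w a := by
    intro t ht
    rw [Finset.prod_pow_eq_pow_sum]
    calc (1 : ℝ) = 2 ^ n * 2⁻¹ ^ n := by rw [← mul_pow]; norm_num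
      _ ≤ 2 ^ n * 2⁻¹ ^ ∑ a ∈ t, w a := mul_le_mul_of_nonneg_left
          (pow_le_pow_of_le_one (by norm_num) (by norm_num) (Finset.mem_filter.1 ht).2)
          (by positivity)
  calc ((s.powerset.filter fun t => ∑ a ∈ t, w a ≤ n).card : ℝ)
      ≤ ∑ t ∈ s.powerset.filter (fun t => ∑ a ∈ t, w a ≤ n), 2 ^ n * ∏ a ∈ t, (2⁻¹ : ℝ) ^ w a := by
        simpa using Finset.card_nsmul_le_sum _ _ 1 hweight
    _ ≤ ∑ t ∈ s.powerset, 2 ^ n * ∏ a ∈ t, (2⁻¹ : ℝ) ^ w a :=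
        Finset.sum_le_sum_of_subset_of_nonneg (Finset.filter_subset _ _)
          fun _ _ _ => by positivity
    _ = 2 ^ n * ∏ a ∈ s, (1 + 2⁻¹ ^ w a) := by rw [← Finset.mul_sum, Finset.prod_one_add]

theorem one_add_inv_two_pow_pow_le_exp_one (l : ℕ) :
    (1 + (2⁻¹ : ℝ) ^ l) ^ 2 ^ l ≤ Real.exp 1 :=
  calc (1 + (2⁻¹ : ℝ) ^ l) ^ 2 ^ l ≤ Real.exp ((2⁻¹ : ℝ) ^ l) ^ 2 ^ l := by
        gcongr
        linarith [Real.add_one_le_exp ((2⁻¹ : ℝ) ^ l)]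
    _ = Real.exp 1 := by
        rw [← Real.exp_nat_mul]
        push_cast
        rw [← mul_pow]
        norm_num

theorem prod_grid_le (n : ℕ) :
    ∏ p ∈ grid n, (1 + (2⁻¹ : ℝ) ^ p.1) ≤ 2 * Real.exp 1 ^ n := by
  rw [Finset.prod_finset_product _ (Finset.range (n + 1)) (fun l => Finset.range (2 ^ l))
      fun p => by simp [mem_grid]]
  simp only [Finset.prod_const, Finset.card_range]
  rw [Finset.prod_range_succ', pow_zero, pow_zero, pow_one, one_add_one_eq_two, mul_comm]
  gcongr
  calc ∏ l ∈ Finset.range n, (1 + (2⁻¹ : ℝ) ^ (l + 1)) ^ 2 ^ (l + 1)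
      ≤ ∏ _l ∈ Finset.range n, Real.exp 1 :=
        Finset.prod_le_prod (fun _ _ => by positivity)
          fun l _ => one_add_inv_two_pow_pow_le_exp_one (l + 1)
    _ = Real.exp 1 ^ n := by simp

def admissible (n : ℕ) : Finset (Finset (ℕ × ℕ)) :=
  (grid n).powerset.filter fun t => ∑ p ∈ t, p.1 ≤ n

theorem card_admissible_le {n : ℕ} (hn : 0 < n) :
    ((admissible n).card : ℝ) ≤ (4 * Real.exp 1) ^ n :=
  calc ((admissible n).card : ℝ)
      ≤ 2 ^ n * ∏ p ∈ grid n, (1 + (2⁻¹ : ℝ) ^ p.1) := card_filter_powerset_sum_le _ _ _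
    _ ≤ 2 ^ n * (2 ^ n * Real.exp 1 ^ n) := by
        gcongr
        exact (prod_grid_le n).trans (by gcongr; exact le_self_pow₀ one_le_two hn.ne')
    _ = (4 * Real.exp 1) ^ n := by rw [← mul_assoc, ← mul_pow, ← mul_pow]; norm_num

section Determination

variable {r : ℝ} {n : ℕ}

def partitionOf (Q : Set (ℕ × ℕ)) : Set (ℕ × ℕ) := children (ancestors Q) \ ancestors Q

theorem exists_mem_admissible_partitionOf_eq (hr : 0 ≤ r) (hn : 0 < n) {μ : SignedMeasure ℝ}
    (hμ : μ.totalVariation Set.univ ≤ 1) :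
    ∃ t ∈ admissible n, partitionOf ↑t = {p : ℕ × ℕ | InPartition μ r n p.1 p.2} := by
  have hT := finite_setOf_terminalDiv (r := r) hn hμ
  refine ⟨hT.toFinset, Finset.mem_filter.2 ⟨Finset.mem_powerset.2 fun q hq => ?_,
    sum_level_terminalDiv_le hr hn hμ fun q hq => hT.mem_toFinset.1 hq⟩, ?_⟩
  · have hq := (hT.mem_toFinset.1 hq).1
    exact mem_grid.2 ⟨hq.level_le hn hμ, hq.lt_two_pow⟩
  · rw [partitionOf, hT.coe_toFinset, ancestors_setOf_terminalDiv hn hμ, setOf_inPartition_eq]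

theorem encard_setOf_partitions_le (hr : 0 ≤ r) (hn : 0 < n) :
    {P : Set (ℕ × ℕ) | ∃ μ : SignedMeasure ℝ, μ.totalVariation Set.univ ≤ 1 ∧
      P = {p : ℕ × ℕ | InPartition μ r n p.1 p.2}}.encard ≤ (admissible n).card := by
  refine (Set.encard_mono (b := (fun t : Finset (ℕ × ℕ) => partitionOf ↑t) '' ↑(admissible n))
    ?_).trans ?_
  · rintro _ ⟨μ, hμ, rfl⟩
    exact exists_mem_admissible_partitionOf_eq hr hn hμ
  · grw [Set.encard_image_le, Set.encard_coe_eq_coe_finsetCard]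

end Determination

theorem essential_partition_size_and_count_general (r : ℝ) (hr0 : 0 < r)
    (n : ℕ) (hn : 0 < n) (μ : MeasureTheory.SignedMeasure ℝ)
    (hμ1 : μ.totalVariation Set.univ ≤ 1) :
    {p : ℕ × ℕ | InPartition μ r n p.1 p.2}.encard ≤ 2 * ((n : ℝ≥0∞) + 1) ∧
      (∑' p : {p : ℕ × ℕ // TerminalDiv μ r n p.1 p.2}, (p.1.1 : ℝ≥0∞)) ≤ (n : ℝ≥0∞) ∧
      {P : Set (ℕ × ℕ) | ∃ ν : MeasureTheory.SignedMeasure ℝ,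
          ν.totalVariation (Set.Ioc (0 : ℝ) r)ᶜ = 0 ∧
          ν.totalVariation Set.univ ≤ 1 ∧
          P = {p : ℕ × ℕ | InPartition ν r n p.1 p.2}}.encard ≤
        ENNReal.ofReal ((4 * Real.exp 1) ^ n) := by
  refine ⟨?_, tsum_level_terminalDiv_le hr0.le hn hμ1, ?_⟩
  · calc _ ≤ ((n + 2 : ℕ∞) : ℝ≥0∞) :=
          ENat.toENNReal_le.2 (encard_setOf_inPartition_le hr0.le hn hμ1)
      _ ≤ 2 * ((n : ℝ≥0∞) + 1) := by exact_mod_cast (show n + 2 ≤ 2 * (n + 1) by omega)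
  · calc _ ≤ ((admissible n).card : ℝ≥0∞) := by
          refine ENat.toENNReal_le.2 <|
            (Set.encard_mono ?_).trans (encard_setOf_partitions_le hr0.le hn)
          exact fun P ⟨ν, _, hν, hP⟩ => ⟨ν, hν, hP⟩
      _ = ENNReal.ofReal (admissible n).card := (ENNReal.ofReal_natCast _).symm
      _ ≤ ENNReal.ofReal ((4 * Real.exp 1) ^ n) := ENNReal.ofReal_le_ofReal (card_admissible_le hn)

/-- Size and counting properties of `n`-essential partitions: for `r < e^{-2}`,
`n ≥ 1` and a signed measure `μ` supported on `(0,r]` with `‖μ‖₁ ≤ 1`: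
(i) the partition `𝕀ⁿ_μ` has at most `2(n+1)` intervals;
(ii) the terminal divided intervals `Q` satisfy `Σ_{l ≥ 0} l·q_l ≤ n`
(where `q_l` counts the elements of `Q` of level `l`), and consequently the number
of possible `n`-essential partitions over all admissible `μ` is at most `(4e)ⁿ`. -/
theorem essential_partition_size_and_count (r : ℝ) (hr0 : 0 < r) (hr : r < Real.exp (-2))
    (n : ℕ) (hn : 0 < n) (μ : MeasureTheory.SignedMeasure ℝ)
    (hsupp : μ.totalVariation (Set.Ioc (0 : ℝ) r)ᶜ = 0)
    (hμ1 : μ.totalVariation Set.univ ≤ 1) :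
    {p : ℕ × ℕ | InPartition μ r n p.1 p.2}.encard ≤ 2 * ((n : ℝ≥0∞) + 1) ∧
      (∑' p : {p : ℕ × ℕ // TerminalDiv μ r n p.1 p.2}, (p.1.1 : ℝ≥0∞)) ≤ (n : ℝ≥0∞) ∧
      {P : Set (ℕ × ℕ) | ∃ ν : MeasureTheory.SignedMeasure ℝ,
          ν.totalVariation (Set.Ioc (0 : ℝ) r)ᶜ = 0 ∧
          ν.totalVariation Set.univ ≤ 1 ∧
          P = {p : ℕ × ℕ | InPartition ν r n p.1 p.2}}.encard ≤
        ENNReal.ofReal ((4 * Real.exp 1) ^ n) :=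
  essential_partition_size_and_count_general r hr0 n hn μ hμ1
end
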